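/- Let k be a field and G a group. If 0 → A → B → C → 0 is a short exact sequence of good k-linear representations of G, then the induced sequence of G-finite duals 0 → C^∨ → B^∨ → A^∨ → 0 is exact. In other words, the G-finite dual functor V ↦ V^∨ is exact on short exact sequences of good representations. -/

import Mathlib

/-!
Statement 3: the `G`-finite dual functor `V ↦ V^∨` is exact on short exact sequences of
good representations: if `0 → A → B → C → 0` is a short exact sequence of good `k`-linear
representations of `G`, then `0 → C^∨ → B^∨ → A^∨ → 0` is exact.
-/

noncomputable section

variable {k G : Type} [Field k] [Group G]

section Defs

variable {V W : Type} [AddCommGroup V] [Module k V] [AddCommGroup W] [Module k W]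

/-- A submodule is a subrepresentation if it is stable under the `G`-action. -/
def IsSubrep (ρ : Representation k G V) (p : Submodule k V) : Prop :=
  ∀ (g : G), ∀ v ∈ p, ρ g v ∈ p

/-- A vector is `G`-finite if it lies in some finite-dimensional subrepresentation. -/
def IsGFiniteVector (ρ : Representation k G V) (v : V) : Prop :=
  ∃ p : Submodule k V, IsSubrep ρ p ∧ FiniteDimensional k p ∧ v ∈ p

/-- The subrepresentation of `G`-finite vectors of a representation. -/
def gFiniteVectors (ρ : Representation k G V) : Submodule k V where
  carrier := {v | IsGFiniteVector ρ v}
  add_mem' := by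
    rintro a b ⟨p, hp, hfp, hap⟩ ⟨q, hq, hfq, hbq⟩
    haveI := hfp; haveI := hfq
    refine ⟨p ⊔ q, ?_, inferInstance, Submodule.add_mem_sup hap hbq⟩
    intro g v hv
    rcases Submodule.mem_sup.mp hv with ⟨x, hx, y, hy, rfl⟩
    rw [map_add]
    exact Submodule.add_mem_sup (hp g x hx) (hq g y hy)
  zero_mem' := by
    refine ⟨⊥, ?_, inferInstance, Submodule.zero_mem ⊥⟩
    intro g v hv
    rw [Submodule.mem_bot] at hv ⊢
    rw [hv, map_zero]
  smul_mem' := by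
    rintro c v ⟨p, hp, hfp, hvp⟩
    exact ⟨p, hp, hfp, p.smul_mem c hvp⟩

lemma gFiniteVectors_isSubrep (ρ : Representation k G V) :
    IsSubrep ρ (gFiniteVectors ρ) := by
  rintro g v ⟨p, hp, hfp, hvp⟩
  exact ⟨p, hp, hfp, hp g v hvp⟩

/-- The restriction of a representation to a subrepresentation. -/
def subRep (ρ : Representation k G V) (p : Submodule k V) (hp : IsSubrep ρ p) :
    Representation k G p where
  toFun g := (ρ g).restrict (fun v hv => hp g v hv)
  map_one' := by
    ext v
    simp [LinearMap.restrict_apply]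
  map_mul' g h := by
    ext v
    simp [LinearMap.restrict_apply]

/-- The representation induced on a quotient by a subrepresentation. -/
def quotRep (ρ : Representation k G V) (p : Submodule k V) (hp : IsSubrep ρ p) :
    Representation k G (V ⧸ p) where
  toFun g := Submodule.mapQ p p (ρ g) (fun v hv => hp g v hv)
  map_one' := by
    apply Submodule.linearMap_qext
    ext v
    simp [Submodule.mapQ_apply]
  map_mul' g h := by
    apply Submodule.linearMap_qext
    ext v
    simp [Submodule.mapQ_apply]

/-- A linear map is `G`-equivariant for representations `ρ`, `σ`. -/
def IsEquivariantMap (ρ : Representation k G V) (σ : Representation k G W)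
    (f : V →ₗ[k] W) : Prop :=
  ∀ (g : G) (v : V), f (ρ g v) = σ g (f v)

/-- Two representations are isomorphic if there is an equivariant linear equivalence. -/
def IsRepIso (ρ : Representation k G V) (σ : Representation k G W) : Prop :=
  ∃ e : V ≃ₗ[k] W, ∀ (g : G) (v : V), e (ρ g v) = σ g (e v)

/-- A representation is simple (irreducible) if it is nonzero and has no nontrivial
subrepresentations. -/
def IsSimpleRep (ρ : Representation k G V) : Prop :=
  Nontrivial V ∧ ∀ p : Submodule k V, IsSubrep ρ p → p = ⊥ ∨ p = ⊤

/-- A decomposition of a representation as an (internal) direct sum of simple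
subrepresentations. -/
structure SimpleDecomposition (ρ : Representation k G V) where
  ι : Type
  c : ι → Submodule k V
  isSubrep : ∀ i, IsSubrep ρ (c i)
  indep : iSupIndep c
  total : ⨆ i, c i = ⊤
  simple : ∀ i, IsSimpleRep (subRep ρ (c i) (isSubrep i))

/-- The multiplicity of a representation `σ` in a simple decomposition: the cardinality of
the set of summands isomorphic to `σ`. -/
def SimpleDecomposition.mult {ρ : Representation k G V} (D : SimpleDecomposition ρ)
    {S : Type} [AddCommGroup S] [Module k S] (σ : Representation k G S) : Cardinal :=
  Cardinal.mk {i : D.ι // IsRepIso (subRep ρ (D.c i) (D.isSubrep i)) σ}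

/-- A representation is good if it is semisimple, every simple subrepresentation is
finite-dimensional, and every isomorphism class of simple representations occurs with
finite multiplicity. -/
def IsGoodRep (ρ : Representation k G V) : Prop :=
  Nonempty (SimpleDecomposition ρ) ∧
  (∀ (p : Submodule k V) (hp : IsSubrep ρ p),
      IsSimpleRep (subRep ρ p hp) → FiniteDimensional k p) ∧
  (∀ (D : SimpleDecomposition ρ) (S : Type) [AddCommGroup S] [Module k S]
      (σ : Representation k G S), IsSimpleRep σ →
      {i : D.ι | IsRepIso (subRep ρ (D.c i) (D.isSubrep i)) σ}.Finite)

/-- The `G`-finite dual `V^∨` of a representation: the `G`-finite vectors of the full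
linear dual. -/
abbrev gFinDual (ρ : Representation k G V) : Submodule k (Module.Dual k V) :=
  gFiniteVectors ρ.dual

/-- The representation of `G` on the `G`-finite dual. -/
abbrev gFinDualRep (ρ : Representation k G V) : Representation k G (gFinDual ρ) :=
  subRep ρ.dual (gFinDual ρ) (gFiniteVectors_isSubrep ρ.dual)

lemma IsEquivariantMap.dualMap {ρ : Representation k G V} {σ : Representation k G W}
    {f : V →ₗ[k] W} (hf : IsEquivariantMap ρ σ f) :
    IsEquivariantMap σ.dual ρ.dual f.dualMap := by
  intro g φ
  ext v
  simp only [LinearMap.dualMap_apply, Representation.dual_apply, Module.Dual.transpose_apply,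
    LinearMap.comp_apply, LinearMap.coe_comp, Function.comp_apply]
  rw [hf]

lemma map_gFiniteVectors_le {ρ : Representation k G V} {σ : Representation k G W}
    {f : V →ₗ[k] W} (hf : IsEquivariantMap ρ σ f) :
    (gFiniteVectors ρ).map f ≤ gFiniteVectors σ := by
  rintro _ ⟨v, ⟨p, hp, hfp, hvp⟩, rfl⟩
  haveI := hfp
  refine ⟨p.map f, ?_, inferInstance, Submodule.mem_map_of_mem hvp⟩
  rintro g _ ⟨w, hw, rfl⟩
  rw [← hf]
  exact Submodule.mem_map_of_mem (hp g w hw)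

/-- The map induced on `G`-finite vectors by an equivariant map. -/
def gFiniteMap (ρ : Representation k G V) (σ : Representation k G W)
    (f : V →ₗ[k] W) (hf : IsEquivariantMap ρ σ f) :
    gFiniteVectors ρ →ₗ[k] gFiniteVectors σ :=
  f.restrict (fun v hv => map_gFiniteVectors_le hf (Submodule.mem_map_of_mem hv))

lemma gFiniteMap_isEquivariant (ρ : Representation k G V) (σ : Representation k G W)
    (f : V →ₗ[k] W) (hf : IsEquivariantMap ρ σ f) :
    IsEquivariantMap (subRep ρ _ (gFiniteVectors_isSubrep ρ))
      (subRep σ _ (gFiniteVectors_isSubrep σ)) (gFiniteMap ρ σ f hf) := by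
  intro g v
  apply Subtype.ext
  exact hf g v.1

/-- The map induced on `G`-finite duals by an equivariant map (the restricted transpose). -/
abbrev gFinDualMap (ρ : Representation k G V) (σ : Representation k G W)
    (f : V →ₗ[k] W) (hf : IsEquivariantMap ρ σ f) :
    gFinDual σ →ₗ[k] gFinDual ρ :=
  gFiniteMap σ.dual ρ.dual f.dualMap hf.dualMap

lemma gFinDualMap_isEquivariant (ρ : Representation k G V) (σ : Representation k G W)
    (f : V →ₗ[k] W) (hf : IsEquivariantMap ρ σ f) :
    IsEquivariantMap (V := gFinDual σ) (W := gFinDual ρ)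
      (gFinDualRep σ) (gFinDualRep ρ) (gFinDualMap ρ σ f hf) :=
  gFiniteMap_isEquivariant σ.dual ρ.dual f.dualMap hf.dualMap

/-!
Dualizing is exact on vector spaces, so only `G`-finiteness of the preimages is at stake.
In the middle, a functional on `B` killing `A` is `ψ ∘ g`, and `ψ` is `G`-finite because the
transpose of the surjection `g` is an injective equivariant map, which pulls finite-dimensional
subrepresentations back to finite-dimensional ones. On the right, semisimplicity of `B` gives a
`G`-stable complement of `A`, hence an equivariant retraction `π : B → A`, and `φ ↦ φ ∘ π`
preserves `G`-finiteness.
-/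

section GFiniteMap

variable {ρ : Representation k G V} {σ : Representation k G W} {T : V →ₗ[k] W}

lemma gFiniteMap_injective (hT : IsEquivariantMap ρ σ T) (hinj : Function.Injective T) :
    Function.Injective (gFiniteMap ρ σ T hT) :=
  fun _ _ h => Subtype.ext (hinj (congrArg Subtype.val h))

lemma mem_gFiniteVectors_of_injective (hT : IsEquivariantMap ρ σ T)
    (hinj : Function.Injective T) {v : V} (hv : T v ∈ gFiniteVectors σ) :
    v ∈ gFiniteVectors ρ := by
  obtain ⟨p, hp, hpfin, hvp⟩ := hv
  refine ⟨p.comap T, fun g u hu => ?_, ?_, hvp⟩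
  · rw [Submodule.mem_comap, hT]
    exact hp g _ hu
  · exact FiniteDimensional.of_injective (T.restrict fun _ hu => hu)
      fun x y h => Subtype.ext (hinj (congrArg Subtype.val h))

lemma mem_range_gFiniteMap_iff (hT : IsEquivariantMap ρ σ T) (hinj : Function.Injective T)
    (w : gFiniteVectors σ) :
    w ∈ LinearMap.range (gFiniteMap ρ σ T hT) ↔ (w : W) ∈ LinearMap.range T := by
  constructor
  · rintro ⟨v, rfl⟩
    exact ⟨v, rfl⟩
  · rintro ⟨v, hv⟩
    exact ⟨⟨v, mem_gFiniteVectors_of_injective hT hinj (hv ▸ w.2)⟩, Subtype.ext hv⟩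

lemma gFiniteMap_surjective_of_rightInverse (hT : IsEquivariantMap ρ σ T) {S : W →ₗ[k] V}
    (hS : IsEquivariantMap σ ρ S) (hTS : Function.RightInverse S T) :
    Function.Surjective (gFiniteMap ρ σ T hT) := fun w =>
  ⟨⟨S w, map_gFiniteVectors_le hS (Submodule.mem_map_of_mem w.2)⟩, Subtype.ext (hTS w)⟩

end GFiniteMap

section Complement

variable {ρ : Representation k G V}

lemma isSubrep_iff_le_comap {p : Submodule k V} : IsSubrep ρ p ↔ ∀ g, p ≤ p.comap (ρ g) :=
  Iff.rfl

lemma IsSubrep.sup {p q : Submodule k V} (hp : IsSubrep ρ p) (hq : IsSubrep ρ q) :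
    IsSubrep ρ (p ⊔ q) := by
  intro g v hv
  obtain ⟨x, hx, y, hy, rfl⟩ := Submodule.mem_sup.mp hv
  rw [map_add]
  exact Submodule.add_mem_sup (hp g x hx) (hq g y hy)

lemma IsSubrep.sSup {s : Set (Submodule k V)} (hs : ∀ p ∈ s, IsSubrep ρ p) :
    IsSubrep ρ (sSup s) :=
  isSubrep_iff_le_comap.mpr fun g => sSup_le fun p hp =>
    (isSubrep_iff_le_comap.mp (hs p hp) g).trans (Submodule.comap_mono (le_sSup hp))

lemma IsSimpleRep.disjoint_or_le {s r : Submodule k V} {hs : IsSubrep ρ s}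
    (hsimple : IsSimpleRep (subRep ρ s hs)) (hr : IsSubrep ρ r) : Disjoint s r ∨ s ≤ r := by
  rw [Submodule.disjoint_iff_comap_eq_bot, ← Submodule.comap_subtype_eq_top]
  exact hsimple.2 (r.comap s.subtype) fun g v hv => hr g v hv

lemma exists_maximal_isSubrep_disjoint (q : Submodule k V) :
    ∃ W, Maximal (fun W => IsSubrep ρ W ∧ Disjoint q W) W := by
  refine zorn_le₀ _ fun c hc hchain => ?_
  rcases c.eq_empty_or_nonempty with rfl | hne
  · exact ⟨⊥, ⟨isSubrep_iff_le_comap.mpr fun _ => bot_le, disjoint_bot_right⟩, by simp⟩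
  · refine ⟨sSup c, ⟨IsSubrep.sSup fun p hp => (hc hp).1, ?_⟩, fun p hp => le_sSup hp⟩
    exact (hchain.directedOn.disjoint_sSup_right).mpr fun p hp => (hc hp).2

lemma SimpleDecomposition.exists_isSubrep_isCompl (D : SimpleDecomposition ρ)
    {q : Submodule k V} (hq : IsSubrep ρ q) : ∃ W, IsSubrep ρ W ∧ IsCompl q W := by
  obtain ⟨W, ⟨hW, hqW⟩, hmax⟩ := exists_maximal_isSubrep_disjoint (ρ := ρ) q
  refine ⟨W, hW, hqW, codisjoint_iff.mpr (eq_top_iff.mpr ?_)⟩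
  rw [← D.total]
  refine iSup_le fun i => ?_
  rcases (D.simple i).disjoint_or_le (hq.sup hW) with hdisj | hle
  · have hsum : Disjoint q (W ⊔ D.c i) := hqW.disjoint_sup_right_of_disjoint_sup_left hdisj.symm
    calc D.c i ≤ W ⊔ D.c i := le_sup_right
      _ ≤ W := hmax ⟨hW.sup (D.isSubrep i), hsum⟩ le_sup_left
      _ ≤ q ⊔ W := le_sup_right
  · exact hle

end Complement

section Retraction

variable {A B : Type} [AddCommGroup A] [Module k A] [AddCommGroup B] [Module k B]
  {ρA : Representation k G A} {ρB : Representation k G B}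

lemma isEquivariantMap_linearProjOfIsCompl {f : A →ₗ[k] B} (hf : IsEquivariantMap ρA ρB f)
    (hinj : Function.Injective f) {W : Submodule k B} (hW : IsSubrep ρB W)
    (hcompl : IsCompl (LinearMap.range f) W) :
    IsEquivariantMap ρB ρA (LinearMap.linearProjOfIsCompl W f hinj hcompl) := by
  intro g b
  obtain ⟨_, ⟨a, rfl⟩, w, hw, rfl⟩ :=
    Submodule.mem_sup.mp (hcompl.sup_eq_top ▸ Submodule.mem_top : b ∈ LinearMap.range f ⊔ W)
  rw [map_add, ← hf g a, map_add, map_add,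
    LinearMap.linearProjOfIsCompl_apply_left, LinearMap.linearProjOfIsCompl_apply_left,
    LinearMap.linearProjOfIsCompl_apply_right' _ _ _ _ _ hw,
    LinearMap.linearProjOfIsCompl_apply_right' _ _ _ _ _ (hW g w hw), add_zero, add_zero]

lemma SimpleDecomposition.exists_equivariant_leftInverse (D : SimpleDecomposition ρB)
    {f : A →ₗ[k] B} (hf : IsEquivariantMap ρA ρB f) (hinj : Function.Injective f) :
    ∃ π : B →ₗ[k] A, IsEquivariantMap ρB ρA π ∧ Function.LeftInverse π f := by
  have hrange : IsSubrep ρB (LinearMap.range f) := by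
    rintro g _ ⟨a, rfl⟩
    exact ⟨ρA g a, hf g a⟩
  obtain ⟨W, hW, hcompl⟩ := D.exists_isSubrep_isCompl hrange
  exact ⟨_, isEquivariantMap_linearProjOfIsCompl hf hinj hW hcompl,
    LinearMap.linearProjOfIsCompl_apply_left _ _ _ _⟩

end Retraction

theorem gFinDual_exact_general
    {A B C : Type} [AddCommGroup A] [Module k A] [AddCommGroup B] [Module k B]
    [AddCommGroup C] [Module k C]
    (ρA : Representation k G A) (ρB : Representation k G B) (ρC : Representation k G C)
    (hgoodB : IsGoodRep ρB)
    (f : A →ₗ[k] B) (g : B →ₗ[k] C)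
    (hf : IsEquivariantMap ρA ρB f) (hg : IsEquivariantMap ρB ρC g)
    (hinj : Function.Injective f) (hexact : LinearMap.range f = LinearMap.ker g)
    (hsurj : Function.Surjective g) :
    Function.Injective (gFinDualMap ρB ρC g hg) ∧
      LinearMap.range (gFinDualMap ρB ρC g hg) = LinearMap.ker (gFinDualMap ρA ρB f hf) ∧
      Function.Surjective (gFinDualMap ρA ρB f hf) := by
  have hgdual : Function.Injective g.dualMap := LinearMap.dualMap_injective_iff.mpr hsurj
  obtain ⟨D⟩ := hgoodB.1
  obtain ⟨π, hπ, hπf⟩ := D.exists_equivariant_leftInverse hf hinj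
  have hπdual : Function.RightInverse π.dualMap f.dualMap := fun φ =>
    LinearMap.ext fun a => congrArg φ (hπf a)
  have hdual_exact : LinearMap.range g.dualMap = LinearMap.ker f.dualMap := by
    rw [LinearMap.range_dualMap_eq_dualAnnihilator_ker, ← hexact,
      LinearMap.ker_dualMap_eq_dualAnnihilator_range]
  refine ⟨gFiniteMap_injective _ hgdual, ?_,
    gFiniteMap_surjective_of_rightInverse _ hπ.dualMap hπdual⟩
  ext φ
  rw [mem_range_gFiniteMap_iff _ hgdual, hdual_exact, LinearMap.mem_ker, LinearMap.mem_ker,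
    ← Subtype.coe_inj]
  rfl

/-- If `0 → A → B → C → 0` is a short exact sequence of good
representations of `G`, then the induced sequence of `G`-finite duals
`0 → C^∨ → B^∨ → A^∨ → 0` is exact. -/
theorem gFinDual_exact
    {A B C : Type} [AddCommGroup A] [Module k A] [AddCommGroup B] [Module k B]
    [AddCommGroup C] [Module k C]
    (ρA : Representation k G A) (ρB : Representation k G B) (ρC : Representation k G C)
    (hgoodA : IsGoodRep ρA) (hgoodB : IsGoodRep ρB) (hgoodC : IsGoodRep ρC)
    (f : A →ₗ[k] B) (g : B →ₗ[k] C)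
    (hf : IsEquivariantMap ρA ρB f) (hg : IsEquivariantMap ρB ρC g)
    (hinj : Function.Injective f) (hexact : LinearMap.range f = LinearMap.ker g)
    (hsurj : Function.Surjective g) :
    Function.Injective (gFinDualMap ρB ρC g hg) ∧
      LinearMap.range (gFinDualMap ρB ρC g hg) = LinearMap.ker (gFinDualMap ρA ρB f hf) ∧
      Function.Surjective (gFinDualMap ρA ρB f hf) :=
  gFinDual_exact_general ρA ρB ρC hgoodB f g hf hg hinj hexact hsurj

end Defs

end
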